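/- Assume q is C¹, q(x) → ∞ and q'(x)/q(x)² → 0 as x → ∞, and H1 holds. Then lim_{z→∞} 2 q(z) e^{γ(z)} ∫_z^∞ e^{-γ(ξ)} dξ = 1. -/

import Mathlib

/-!
Put `F z = ∫_z^∞ e^{-γ}` and `G z = e^{-γ z} / (2 q z)`. Both tend to `0`, `F' = -e^{-γ}` and
`G' = -e^{-γ} (1 + q' / (2 q²))`, so `F' / G' → 1` because `q' / q² → 0`, and L'Hôpital's rule
gives `F / G → 1`. The same comparison with `G` shows that `e^{-γ}` is integrable near `∞`.
-/

open MeasureTheory Real Filter Set Topology Asymptotics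

section TailIntegral

variable {f : ℝ → ℝ} {a : ℝ}

theorem integral_Ioi_eq_sub_intervalIntegral (hfi : IntegrableOn f (Ioi a)) {x : ℝ} (hx : a ≤ x) :
    ∫ ξ in Ioi x, f ξ = (∫ ξ in Ioi a, f ξ) - ∫ ξ in a..x, f ξ := by
  rw [← intervalIntegral.integral_Ioi_sub_Ioi hfi hx, sub_sub_cancel]

theorem hasDerivAt_integral_Ioi (hfi : IntegrableOn f (Ioi a)) {z : ℝ} (hz : a < z)
    (hf : ContinuousAt f z) : HasDerivAt (fun x => ∫ ξ in Ioi x, f ξ) (-f z) z := by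
  have hint : IntervalIntegrable f volume a z :=
    (intervalIntegrable_iff_integrableOn_Ioc_of_le hz.le).2 (hfi.mono_set Ioc_subset_Ioi_self)
  have hmeas : StronglyMeasurableAtFilter f (𝓝 z) :=
    ⟨Ioi a, Ioi_mem_nhds hz, hfi.aestronglyMeasurable⟩
  have hsub := (intervalIntegral.integral_hasDerivAt_right hint hmeas hf).const_sub
    (∫ ξ in Ioi a, f ξ)
  refine hsub.congr_of_eventuallyEq ?_
  filter_upwards [lt_mem_nhds hz] with x hx using integral_Ioi_eq_sub_intervalIntegral hfi hx.le

theorem tendsto_integral_Ioi_atTop (hfi : IntegrableOn f (Ioi a)) :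
    Tendsto (fun x => ∫ ξ in Ioi x, f ξ) atTop (𝓝 0) := by
  have hlim := (intervalIntegral_tendsto_integral_Ioi a hfi tendsto_id).const_sub
    (∫ ξ in Ioi a, f ξ)
  rw [sub_self] at hlim
  refine hlim.congr' ?_
  filter_upwards [eventually_ge_atTop a] with x hx
  exact (integral_Ioi_eq_sub_intervalIntegral hfi hx).symm

theorem integrableAtFilter_atTop_of_hasDerivAt_neg {g h : ℝ → ℝ} {c : ℝ}
    (hg : ∀ᶠ x in atTop, HasDerivAt g (-h x) x) (hh : ∀ᶠ x in atTop, 0 ≤ h x)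
    (hgc : Tendsto g atTop (𝓝 c)) : IntegrableAtFilter h atTop := by
  obtain ⟨b, hb⟩ := (hg.and hh).exists_forall_of_atTop
  refine ⟨Ioi b, Ioi_mem_atTop b, integrableOn_Ioi_deriv_of_nonneg' (g := -g)
    (fun x hx => (hb x hx).1.neg.congr_deriv (neg_neg _)) (fun x hx => (hb x hx.le).2) hgc.neg⟩

theorem tendsto_integral_Ioi_div {g h : ℝ → ℝ} {l : ℝ} (hf : ∀ᶠ x in atTop, ContinuousAt f x)
    (hg : ∀ᶠ x in atTop, HasDerivAt g (-h x) x) (hh : ∀ᶠ x in atTop, 0 < h x)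
    (hg0 : Tendsto g atTop (𝓝 0)) (hfh : Tendsto (fun x => f x / h x) atTop (𝓝 l)) :
    Tendsto (fun x => (∫ ξ in Ioi x, f ξ) / g x) atTop (𝓝 l) := by
  obtain ⟨b, hb⟩ := hf.exists_forall_of_atTop
  have hfm : StronglyMeasurableAtFilter f atTop :=
    ⟨Ioi b, Ioi_mem_atTop b, (continuousOn_of_forall_continuousAt fun x hx =>
      hb x (le_of_lt hx)).aestronglyMeasurable measurableSet_Ioi⟩
  have hfO : f =O[atTop] h :=
    isBigO_of_div_tendsto_nhds (hh.mono fun x hx h0 => absurd h0 hx.ne') l hfh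
  obtain ⟨a, ha⟩ := integrableAtFilter_atTop_iff.1 <| hfO.integrableAtFilter hfm <|
    integrableAtFilter_atTop_of_hasDerivAt_neg hg (hh.mono fun _ => le_of_lt) hg0
  have hfi : IntegrableOn f (Ioi a) := ha.mono_set Ioi_subset_Ici_self
  have hF : ∀ᶠ x in atTop, HasDerivAt (fun x => ∫ ξ in Ioi x, f ξ) (-f x) x := by
    filter_upwards [eventually_gt_atTop a, hf] with x hx hfx
    exact hasDerivAt_integral_Ioi hfi hx hfx
  refine HasDerivAt.lhopital_zero_atTop hF hg (hh.mono fun x hx => neg_ne_zero.2 hx.ne')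
    (tendsto_integral_Ioi_atTop hfi) hg0 ?_
  simpa only [neg_div_neg_eq] using hfh

end TailIntegral

section Comparison

variable {q γ : ℝ → ℝ}

theorem hasDerivAt_exp_neg_div_two_mul {q' x : ℝ} (hγ : HasDerivAt γ (2 * q x) x)
    (hq : HasDerivAt q q' x) (hx : q x ≠ 0) :
    HasDerivAt (fun z => exp (-γ z) / (2 * q z)) (-(exp (-γ x) * (1 + q' / (2 * q x ^ 2)))) x := by
  refine (hγ.fun_neg.exp.fun_div (hq.const_mul 2) (mul_ne_zero two_ne_zero hx)).congr_deriv ?_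
  field_simp
  ring

theorem tendsto_exp_neg_div_two_mul_atTop (hγ : ∀ x, HasDerivAt γ (2 * q x) x)
    (hq : Tendsto q atTop atTop) :
    Tendsto (fun x => exp (-γ x) / (2 * q x)) atTop (𝓝 0) := by
  obtain ⟨M, hM⟩ := (hq.eventually_gt_atTop 0).exists_forall_of_atTop
  have hmono : MonotoneOn γ (Ici M) :=
    monotoneOn_of_hasDerivWithinAt_nonneg (convex_Ici M)
      (fun x _ => (hγ x).continuousAt.continuousWithinAt) (fun x _ => (hγ x).hasDerivWithinAt)
      (fun x hx => by have := hM x (interior_subset hx); positivity)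
  refine squeeze_zero' ?_ ?_
    ((tendsto_const_nhds (x := exp (-γ M))).div_atTop (hq.const_mul_atTop two_pos))
  · filter_upwards [eventually_ge_atTop M] with x hx
    have := hM x hx
    positivity
  · filter_upwards [eventually_ge_atTop M] with x hx
    have := hM x hx
    gcongr
    exact hmono self_mem_Ici hx hx

end Comparison

theorem q_exp_gamma_tail_tendsto_one_general
    (q γ : ℝ → ℝ)
    (hq : ContDiff ℝ 1 q)
    (hγ : ∀ y, γ y = 2 * ∫ t in (0:ℝ)..y, q t)
    (H2a : Tendsto q atTop atTop)
    (H2b : Tendsto (fun x => deriv q x / q x ^ 2) atTop (nhds 0)) :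
    Tendsto
      (fun z => 2 * q z * Real.exp (γ z) * ∫ ξ in Set.Ioi z, Real.exp (-(γ ξ)))
      atTop (nhds 1) := by
  have hγd : ∀ y, HasDerivAt γ (2 * q y) y := fun y => by
    rw [show γ = fun y => 2 * ∫ t in (0:ℝ)..y, q t from funext hγ]
    exact (hq.continuous.integral_hasStrictDerivAt 0 y).hasDerivAt.const_mul 2
  set u := fun x => deriv q x / (2 * q x ^ 2)
  have hu : Tendsto (fun x => 1 + u x) atTop (𝓝 1) := by
    simpa [u, div_mul_eq_div_div_swap] using (H2b.div_const 2).const_add 1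
  have hqpos := H2a.eventually_gt_atTop 0
  have hG : ∀ᶠ x in atTop, HasDerivAt (fun z => exp (-γ z) / (2 * q z))
      (-(exp (-γ x) * (1 + u x))) x := by
    filter_upwards [hqpos] with x hx
    exact hasDerivAt_exp_neg_div_two_mul (hγd x)
      (hq.differentiable one_ne_zero x).hasDerivAt hx.ne'
  have hratio : Tendsto (fun x => exp (-γ x) / (exp (-γ x) * (1 + u x))) atTop (𝓝 1) := by
    simpa only [div_mul_cancel_left₀ (exp_ne_zero _), inv_one] using hu.inv₀ one_ne_zero
  have hlim := tendsto_integral_Ioi_div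
    (f := fun x => exp (-γ x)) (Eventually.of_forall fun x => (hγd x).continuousAt.neg.rexp)
    hG ((hu.eventually (lt_mem_nhds one_pos)).mono fun x hx => mul_pos (exp_pos _) hx)
    (tendsto_exp_neg_div_two_mul_atTop hγd H2a) hratio
  refine hlim.congr' ?_
  filter_upwards [hqpos] with x hx
  rw [exp_neg]
  field_simp

/-- Under H1 and H2, 2 q(z) e^{γ(z)} ∫_z^∞ e^{-γ(ξ)} dξ → 1 as z → ∞. -/
theorem q_exp_gamma_tail_tendsto_one
    (q γ : ℝ → ℝ)
    (hq : ContDiff ℝ 1 q)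
    (hγ : ∀ y, γ y = 2 * ∫ t in (0:ℝ)..y, q t)
    (H1 : ∫⁻ y in Set.Ioi (0:ℝ),
        ENNReal.ofReal (Real.exp (γ y)) *
          ∫⁻ z in Set.Ioi y, ENNReal.ofReal (Real.exp (-(γ z))) < ⊤)
    (H2a : Tendsto q atTop atTop)
    (H2b : Tendsto (fun x => deriv q x / q x ^ 2) atTop (nhds 0)) :
    Tendsto
      (fun z => 2 * q z * Real.exp (γ z) * ∫ ξ in Set.Ioi z, Real.exp (-(γ ξ)))
      atTop (nhds 1) :=
  q_exp_gamma_tail_tendsto_one_general q γ hq hγ H2a H2b
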